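/- arXiv:1911.05773 — 2 statements merged into one kernel-verified Lean document; each statement's English description precedes it below -/
import Mathlib

section
/- Let π : E → M be a vector bundle and Y a projectable vector field on E (Tπ ∘ Y = X ∘ π for some vector field X on M) with local flow φ_s. Then the fibre derivative FY is a linear vector field on the pullback bundle π*E → E whose local flow is Fφ_s, the fibre derivative of φ_s. -/
/-!
Put `H_s = Dφ_s(a, b)(0, v)`, so that `Fφ_s(a, b, v) = (φ_s(a, b), (H_s)₂)`. Since the mixed
partial derivatives of `(s, x) ↦ φ_s(x)` commute, `H` solves the variational equation
`H' = DY(φ_s(a, b)) H` with `H_0 = (0, v)`. Projectability makes the base component of `DY`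
blind to vertical vectors, so `(H_s)₁` solves a homogeneous linear ODE with zero initial value and
vanishes: `H_s` stays vertical. The variational equation then says exactly that
`s ↦ Fφ_s(a, b, v)` is an integral curve of `FY`, and `FY` is fibrewise linear because it is a
derivative.
-/

open Set

theorem eq_zero_of_hasDerivAt_clm_apply {E : Type*} [NormedAddCommGroup E] [NormedSpace ℝ E]
    {A : ℝ → E →L[ℝ] E} {w : ℝ → E} (hA : Continuous A)
    (hw : ∀ s, HasDerivAt w (A s (w s)) s) (h0 : w 0 = 0) (t : ℝ) : w t = 0 := by
  set R := |t| + 1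
  obtain ⟨C, hC⟩ := isCompact_Icc.exists_bound_of_continuousOn (s := Icc (-R) R) hA.continuousOn
  have hLip : ∀ s ∈ Ioo (-R) R, LipschitzOnWith C.toNNReal (A s) univ := fun s hs => by
    have hCs := hC s (Ioo_subset_Icc_self hs)
    exact ((A s).lipschitz.weaken
      ((Real.le_toNNReal_iff_coe_le ((norm_nonneg _).trans hCs)).2 hCs)).lipschitzOnWith
  refine ODE_solution_unique_of_mem_Icc (g := 0) hLip (t₀ := 0) ⟨?_, ?_⟩
    (HasDerivAt.continuousOn fun s _ => hw s) (fun s _ => hw s) (fun _ _ => trivial)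
    continuousOn_const (fun s _ => by simp)
    (fun _ _ => trivial) h0 ⟨?_, ?_⟩ <;> grind [abs_nonneg, le_abs_self, neg_abs_le]

section Variational
variable {E : Type*} [NormedAddCommGroup E] [NormedSpace ℝ E]

theorem fderiv_apply_eq_fderiv_uncurry_apply {φ : ℝ → E → E}
    (hφ : Differentiable ℝ (fun q : ℝ × E => φ q.1 q.2)) (s : ℝ) (x u : E) :
    fderiv ℝ (φ s) x u = fderiv ℝ (fun q : ℝ × E => φ q.1 q.2) (s, x) (0, u) := by
  have h := (hφ (s, x)).hasFDerivAt.comp x (hasFDerivAt_prodMk_right s x)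
  rw [show (fun q : ℝ × E => φ q.1 q.2) ∘ (fun y => (s, y)) = φ s from rfl] at h
  simp [h.fderiv]

theorem fderiv_uncurry_apply_one_zero {Y : E → E} {φ : ℝ → E → E}
    (hφ : Differentiable ℝ (fun q : ℝ × E => φ q.1 q.2))
    (hflow : ∀ t x, HasDerivAt (fun s => φ s x) (Y (φ t x)) t) (q : ℝ × E) :
    fderiv ℝ (fun q : ℝ × E => φ q.1 q.2) q (1, 0) = Y (φ q.1 q.2) := by
  have h := (hφ q).hasFDerivAt.comp_hasDerivAt q.1
    ((hasDerivAt_id q.1).prodMk (hasDerivAt_const q.1 q.2))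
  exact h.unique (hflow q.1 q.2)

theorem hasDerivAt_fderiv_flow_apply {Y : E → E} {φ : ℝ → E → E}
    (hφ : ContDiff ℝ 2 (fun q : ℝ × E => φ q.1 q.2)) (hY : Differentiable ℝ Y)
    (hflow : ∀ t x, HasDerivAt (fun s => φ s x) (Y (φ t x)) t) (x u : E) (t : ℝ) :
    HasDerivAt (fun s => fderiv ℝ (φ s) x u)
      (fderiv ℝ Y (φ t x) (fderiv ℝ (φ t) x u)) t := by
  set Φ : ℝ × E → E := fun q => φ q.1 q.2
  have hΦ : Differentiable ℝ Φ := hφ.differentiable (by norm_num)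
  have hD2 : HasFDerivAt (fderiv ℝ Φ) (fderiv ℝ (fderiv ℝ Φ) (t, x)) (t, x) :=
    ((hφ.fderiv_right (m := 1) (by norm_num)).differentiable (by norm_num) _).hasFDerivAt
  have hsymm := (hφ.contDiffAt (x := (t, x))).isSymmSndFDerivAt
    (by rw [minSmoothness_of_isRCLikeNormedField])
  have hcurve : HasDerivAt (fun s => fderiv ℝ Φ (s, x))
      (fderiv ℝ (fderiv ℝ Φ) (t, x) (1, 0)) t :=
    hD2.comp_hasDerivAt t ((hasDerivAt_id t).prodMk (hasDerivAt_const t x))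
  have hline : HasDerivAt (fun s => fderiv ℝ Φ (s, x) (0, u))
      (fderiv ℝ (fderiv ℝ Φ) (t, x) (1, 0) (0, u)) t := by
    simpa using hcurve.clm_apply (hasDerivAt_const t ((0 : ℝ), u))
  have hflip : HasFDerivAt (fun q => fderiv ℝ Φ q (1, 0))
      ((fderiv ℝ (fderiv ℝ Φ) (t, x)).flip (1, 0)) (t, x) := by
    simpa using hD2.clm_apply (hasFDerivAt_const ((1 : ℝ), (0 : E)) (t, x))
  have hYΦ : HasFDerivAt (fun q => fderiv ℝ Φ q (1, 0))
      ((fderiv ℝ Y (Φ (t, x))).comp (fderiv ℝ Φ (t, x))) (t, x) := by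
    rw [show (fun q => fderiv ℝ Φ q (1, 0)) = Y ∘ Φ from
      funext (fderiv_uncurry_apply_one_zero hΦ hflow)]
    exact (hY _).hasFDerivAt.comp (t, x) (hΦ _).hasFDerivAt
  have hmixed : fderiv ℝ (fderiv ℝ Φ) (t, x) (0, u) (1, 0)
      = fderiv ℝ Y (Φ (t, x)) (fderiv ℝ Φ (t, x) (0, u)) :=
    congrArg (fun L => L ((0 : ℝ), u)) (hflip.unique hYΦ)
  rw [hsymm.eq, hmixed] at hline
  simpa only [fderiv_apply_eq_fderiv_uncurry_apply hΦ] using hline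

end Variational

section FD
variable {M V : Type*} [NormedAddCommGroup M] [NormedSpace ℝ M]
  [NormedAddCommGroup V] [NormedSpace ℝ V]

/-- The fibre derivative of a map `E → E` (e.g. a flow map or a vector field),
`Fφ(a,b) = (φ(a), ν(Tφ(ξ^∨_π(a,b))))` in the local model. -/
noncomputable def fibreDerivSelf (φ : M × V → M × V) : M × V × V → M × V × V :=
  fun p => ((φ (p.1, p.2.1)).1, (φ (p.1, p.2.1)).2,
    deriv (fun s : ℝ => (φ (p.1, p.2.1 + s • p.2.2)).2) 0)

theorem hasDerivAt_vertical_line {G : Type*} [NormedAddCommGroup G] [NormedSpace ℝ G]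
    {f : M × V → G} {m : M} {y : V} (hf : DifferentiableAt ℝ f (m, y)) (z : V) :
    HasDerivAt (fun r : ℝ => f (m, y + r • z)) (fderiv ℝ f (m, y) (0, z)) 0 := by
  have hline : HasDerivAt (fun r : ℝ => (m, y + r • z)) ((0 : M), z) 0 :=
    (hasDerivAt_const 0 m).prodMk
      (by simpa using ((hasDerivAt_id (0 : ℝ)).smul_const z).const_add y)
  exact hf.hasFDerivAt.comp_hasDerivAt_of_eq 0 hline (by simp)

theorem fibreDerivSelf_eq {φ : M × V → M × V} {m : M} {y : V}
    (hφ : DifferentiableAt ℝ φ (m, y)) (z : V) :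
    fibreDerivSelf φ (m, y, z) =
      ((φ (m, y)).1, (φ (m, y)).2, (fderiv ℝ φ (m, y) (0, z)).2) := by
  have h : HasDerivAt (fun r : ℝ => (φ (m, y + r • z)).2) (fderiv ℝ φ (m, y) (0, z)).2 0 :=
    (ContinuousLinearMap.snd ℝ M V).hasFDerivAt.comp_hasDerivAt 0 (hasDerivAt_vertical_line hφ z)
  simp only [fibreDerivSelf, h.deriv]

theorem isLinearMap_fibreDerivSelf {Y : M × V → M × V} {m : M} {y : V}
    (hY : DifferentiableAt ℝ Y (m, y)) :
    IsLinearMap ℝ (fun z : V => (fibreDerivSelf Y (m, y, z)).2.2) := by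
  simp only [fibreDerivSelf_eq hY]
  exact (ContinuousLinearMap.snd ℝ M V ∘L fderiv ℝ Y (m, y) ∘L
    ContinuousLinearMap.inr ℝ M V).toLinearMap.isLinear

theorem fderiv_fst_vertical_eq_zero {Y : M × V → M × V} {X : M → M}
    (hproj : ∀ p : M × V, (Y p).1 = X p.1) {m : M} {y : V}
    (hY : DifferentiableAt ℝ Y (m, y)) (z : V) : (fderiv ℝ Y (m, y) (0, z)).1 = 0 := by
  have h := (ContinuousLinearMap.fst ℝ M V).hasFDerivAt.comp_hasDerivAt 0
    (hasDerivAt_vertical_line hY z)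
  simp only [Function.comp_def, ContinuousLinearMap.coe_fst', hproj] at h
  exact h.unique (hasDerivAt_const 0 (X m))

theorem fderiv_flow_vertical_fst_eq_zero {Y : M × V → M × V} {X : M → M}
    (hY : ContDiff ℝ 1 Y) (hproj : ∀ p : M × V, (Y p).1 = X p.1)
    {φ : ℝ → M × V → M × V}
    (hφ : ContDiff ℝ 2 (fun q : ℝ × (M × V) => φ q.1 q.2)) (hφ0 : φ 0 = id)
    (hflow : ∀ t p, HasDerivAt (fun s => φ s p) (Y (φ t p)) t) (p : M × V) (v : V) (t : ℝ) :
    (fderiv ℝ (φ t) p (0, v)).1 = 0 := by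
  have hYd : Differentiable ℝ Y := hY.differentiable one_ne_zero
  set A : ℝ → M →L[ℝ] M := fun s =>
    ContinuousLinearMap.fst ℝ M V ∘L fderiv ℝ Y (φ s p) ∘L ContinuousLinearMap.inl ℝ M V
  have hA : Continuous A := by
    have hφp : Continuous fun s => φ s p :=
      hφ.continuous.comp (continuous_id.prodMk continuous_const)
    exact continuous_const.clm_comp
      (((hY.continuous_fderiv one_ne_zero).comp hφp).clm_comp continuous_const)
  refine eq_zero_of_hasDerivAt_clm_apply (w := fun s => (fderiv ℝ (φ s) p (0, v)).1) hA
    (fun s => ?_) (by simp [hφ0]) t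
  have hvar := (ContinuousLinearMap.fst ℝ M V).hasFDerivAt.comp_hasDerivAt s
    (hasDerivAt_fderiv_flow_apply hφ hYd hflow p (0, v) s)
  set H := fderiv ℝ (φ s) p (0, v)
  have hsplit : H = (H.1, 0) + (0, H.2) := by simp
  rw [hsplit, map_add] at hvar
  simpa [A, Function.comp_def, fderiv_fst_vertical_eq_zero hproj (hYd _)] using hvar

/-- for a smooth projectable vector field `Y` with local flow `φ`,
the fibre derivative `FY` is a linear vector field on `π^*E` and its local flow
is `Fφ_s`. -/
theorem fibreDeriv_vectorField_linear_and_flow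
    (Y : M × V → M × V) (hY : ContDiff ℝ (⊤ : ℕ∞) Y)
    (X : M → M) (hproj : ∀ p : M × V, (Y p).1 = X p.1)
    (φ : ℝ → M × V → M × V)
    (hφ : ContDiff ℝ (⊤ : ℕ∞) (fun q : ℝ × (M × V) => φ q.1 q.2))
    (hφ0 : φ 0 = id)
    (hflow : ∀ (t : ℝ) (p : M × V), HasDerivAt (fun s => φ s p) (Y (φ t p)) t) :
    (∀ (m : M) (y : V),
      IsLinearMap ℝ (fun z : V => (fibreDerivSelf Y (m, y, z)).2.2)) ∧
    (∀ (t : ℝ) (p : M × V × V),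
      HasDerivAt (fun s => fibreDerivSelf (φ s) p)
        (fibreDerivSelf Y (fibreDerivSelf (φ t) p)) t) := by
  have hYd : Differentiable ℝ Y := hY.differentiable (by simp)
  have hφ2 : ContDiff ℝ 2 (fun q : ℝ × (M × V) => φ q.1 q.2) :=
    hφ.of_le (WithTop.coe_le_coe.2 le_top)
  have hφd : ∀ s, Differentiable ℝ (φ s) := fun s x =>
    (hφ2.differentiable two_ne_zero (s, x)).comp x
      ((differentiableAt_const s).prodMk differentiableAt_id)
  refine ⟨fun m y => isLinearMap_fibreDerivSelf (hYd _), fun t ⟨a, b, v⟩ => ?_⟩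
  have hvert : fderiv ℝ (φ t) (a, b) (0, v) = (0, (fderiv ℝ (φ t) (a, b) (0, v)).2) :=
    Prod.ext (fderiv_flow_vertical_fst_eq_zero (hY.of_le (WithTop.coe_le_coe.2 le_top)) hproj
      hφ2 hφ0 hflow (a, b) v t) rfl
  have hH := (ContinuousLinearMap.snd ℝ M V).hasFDerivAt.comp_hasDerivAt t
    (hasDerivAt_fderiv_flow_apply hφ2 hYd hflow (a, b) (0, v) t)
  have hcurve := hflow t (a, b)
  simp only [fibreDerivSelf_eq (hφd _ _), fibreDerivSelf_eq (hYd _), Prod.mk.eta, ← hvert]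
  exact ((ContinuousLinearMap.fst ℝ M V).hasFDerivAt.comp_hasDerivAt t hcurve).prodMk
    (((ContinuousLinearMap.snd ℝ M V).hasFDerivAt.comp_hasDerivAt t hcurve).prodMk hH)

end FD
end

section
/- Let π : E → M be a vector bundle and Y, Y' projectable vector fields on E. Then the fibre derivative commutes with the Lie bracket: [FY, FY'] = F[Y, Y'] as (linear) vector fields on π*E. -/
/-
Write `E = M × V` and `π^*E = M × V × V`. The fibre derivative is `FY = ρ ∘ Y^c ∘ ξ`,
where `Y^c (p, u) = (Y p, DY(p) u)` is the complete lift on `TE = E × E`, the map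
`ξ (x, v, w) = ((x, v), (0, w))` (`verticalLift`) embeds `π^*E` as the vertical bundle, and
`ρ` (`verticalProj`) is its left inverse forgetting the horizontal velocity. Projectability
of `Y` says that `Y^c` is tangent to the vertical bundle, so `FY` is `ξ`-related to `Y^c`.
Brackets of related fields are related, and `[Y^c, Y'^c] = [Y, Y']^c` by the symmetry of
second derivatives; applying `ρ` to `ξ [FY, FY'] = [Y, Y']^c ∘ ξ` gives `[FY, FY'] = F[Y, Y']`.
-/

section FD
variable {M V : Type*} [NormedAddCommGroup M] [NormedSpace ℝ M]
  [NormedAddCommGroup V] [NormedSpace ℝ V]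

noncomputable def lieBkt {E : Type*} [NormedAddCommGroup E] [NormedSpace ℝ E]
    (X Y : E → E) : E → E :=
  fun p => fderiv ℝ Y p (X p) - fderiv ℝ X p (Y p)

/-- The fibre derivative `FY` of a vector field `Y` on `E = M × V`, as a vector field
on `π^*E ≅ M × V × V`. -/
noncomputable def fibreDerivVF (Y : M × V → M × V) : M × V × V → M × V × V :=
  fun p => ((Y (p.1, p.2.1)).1, (Y (p.1, p.2.1)).2,
    deriv (fun s : ℝ => (Y (p.1, p.2.1 + s • p.2.2)).2) 0)

open VectorField

theorem lieBkt_eq_lieBracket {E : Type*} [NormedAddCommGroup E] [NormedSpace ℝ E] :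
    lieBkt (E := E) = lieBracket ℝ := rfl

section Related
variable {𝕜 F G : Type*} [NontriviallyNormedField 𝕜]
  [NormedAddCommGroup F] [NormedSpace 𝕜 F] [NormedAddCommGroup G] [NormedSpace 𝕜 G]

theorem map_fderiv_of_related (L : F →L[𝕜] G) {A : F → F} {B : G → G} {q : F}
    (hA : DifferentiableAt 𝕜 A q) (hB : DifferentiableAt 𝕜 B (L q))
    (hAB : ∀ q, L (A q) = B (L q)) (u : F) :
    L (fderiv 𝕜 A q u) = fderiv 𝕜 B (L q) (L u) := by
  have h := congrArg (fun f => fderiv 𝕜 f q u) (funext hAB : L ∘ A = B ∘ L)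
  simpa [fderiv_comp q L.differentiableAt hA, fderiv_comp q hB L.differentiableAt,
    L.fderiv] using h

theorem map_lieBracket_of_related (L : F →L[𝕜] G) {A A' : F → F} {B B' : G → G} {q : F}
    (hA : DifferentiableAt 𝕜 A q) (hA' : DifferentiableAt 𝕜 A' q)
    (hB : DifferentiableAt 𝕜 B (L q)) (hB' : DifferentiableAt 𝕜 B' (L q))
    (hAB : ∀ q, L (A q) = B (L q)) (hAB' : ∀ q, L (A' q) = B' (L q)) :
    L (lieBracket 𝕜 A A' q) = lieBracket 𝕜 B B' (L q) := by
  simp only [lieBracket, map_sub, map_fderiv_of_related L hA hB hAB,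
    map_fderiv_of_related L hA' hB' hAB', hAB, hAB']

end Related

section CompleteLift
variable {E : Type*} [NormedAddCommGroup E] [NormedSpace ℝ E]

noncomputable def completeLift (Y : E → E) : E × E → E × E :=
  fun z => (Y z.1, fderiv ℝ Y z.1 z.2)

theorem differentiable_completeLift {Y : E → E} (hY : ContDiff ℝ 2 Y) :
    Differentiable ℝ (completeLift Y) :=
  (((hY.of_le one_le_two).comp contDiff_fst).prodMk
    ((hY.fderiv_right one_add_one_eq_two.le).comp contDiff_fst |>.clm_apply contDiff_snd)
  ).differentiable one_ne_zero

theorem fderiv_completeLift_apply {Y : E → E} (hY : ContDiff ℝ 2 Y) (z a : E × E) :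
    fderiv ℝ (completeLift Y) z a
      = (fderiv ℝ Y z.1 a.1, fderiv ℝ (fderiv ℝ Y) z.1 a.1 z.2 + fderiv ℝ Y z.1 a.2) := by
  have hY1 : HasFDerivAt Y (fderiv ℝ Y z.1) z.1 := (hY.differentiable two_ne_zero z.1).hasFDerivAt
  have hDY : HasFDerivAt (fderiv ℝ Y) (fderiv ℝ (fderiv ℝ Y) z.1) z.1 :=
    ((hY.fderiv_right one_add_one_eq_two.le).differentiable one_ne_zero z.1).hasFDerivAt
  have h : HasFDerivAt (completeLift Y) _ z := (hY1.comp z hasFDerivAt_fst).prodMk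
    ((hDY.comp z hasFDerivAt_fst).clm_apply hasFDerivAt_snd)
  rw [h.fderiv]
  simp [add_comm]

theorem fderiv_lieBracket_apply {Y Y' : E → E} (hY : ContDiff ℝ 2 Y) (hY' : ContDiff ℝ 2 Y')
    (p u : E) :
    fderiv ℝ (lieBracket ℝ Y Y') p u
      = fderiv ℝ (fderiv ℝ Y') p u (Y p) + fderiv ℝ Y' p (fderiv ℝ Y p u)
        - (fderiv ℝ (fderiv ℝ Y) p u (Y' p) + fderiv ℝ Y p (fderiv ℝ Y' p u)) := by
  have hD {Z : E → E} (hZ : ContDiff ℝ 2 Z) : Differentiable ℝ (fderiv ℝ Z) :=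
    (hZ.fderiv_right one_add_one_eq_two.le).differentiable one_ne_zero
  have hd {Z : E → E} (hZ : ContDiff ℝ 2 Z) : Differentiable ℝ Z :=
    hZ.differentiable two_ne_zero
  rw [show lieBracket ℝ Y Y' = fun p => fderiv ℝ Y' p (Y p) - fderiv ℝ Y p (Y' p) from rfl,
    fderiv_fun_sub ((hD hY' p).clm_apply (hd hY p)) ((hD hY p).clm_apply (hd hY' p)),
    fderiv_clm_apply (hD hY' p) (hd hY p), fderiv_clm_apply (hD hY p) (hd hY' p)]
  simp [add_comm]

theorem lieBracket_completeLift {Y Y' : E → E} (hY : ContDiff ℝ 2 Y) (hY' : ContDiff ℝ 2 Y') :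
    lieBracket ℝ (completeLift Y) (completeLift Y') = completeLift (lieBracket ℝ Y Y') := by
  funext z
  have hsymm := (hY.contDiffAt (x := z.1)).isSymmSndFDerivAt (by simp)
  have hsymm' := (hY'.contDiffAt (x := z.1)).isSymmSndFDerivAt (by simp)
  simp only [lieBracket, fderiv_completeLift_apply hY, fderiv_completeLift_apply hY',
    fderiv_lieBracket_apply hY hY', completeLift, hsymm z.2, hsymm' z.2, Prod.mk_sub_mk]

end CompleteLift

noncomputable def verticalLift : (M × V × V) →L[ℝ] (M × V) × (M × V) :=
  ((ContinuousLinearMap.fst ℝ M (V × V)).prod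
      ((ContinuousLinearMap.fst ℝ V V).comp (ContinuousLinearMap.snd ℝ M (V × V)))).prod
    ((0 : (M × V × V) →L[ℝ] M).prod
      ((ContinuousLinearMap.snd ℝ V V).comp (ContinuousLinearMap.snd ℝ M (V × V))))

noncomputable def verticalProj : (M × V) × (M × V) →L[ℝ] M × V × V :=
  ((ContinuousLinearMap.fst ℝ M V).comp (ContinuousLinearMap.fst ℝ (M × V) (M × V))).prod
    (((ContinuousLinearMap.snd ℝ M V).comp (ContinuousLinearMap.fst ℝ (M × V) (M × V))).prod
      ((ContinuousLinearMap.snd ℝ M V).comp (ContinuousLinearMap.snd ℝ (M × V) (M × V))))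

@[simp] theorem verticalLift_apply (q : M × V × V) :
    verticalLift q = ((q.1, q.2.1), ((0 : M), q.2.2)) := rfl

@[simp] theorem verticalProj_apply (z : (M × V) × (M × V)) :
    verticalProj z = (z.1.1, z.1.2, z.2.2) := rfl

theorem verticalProj_verticalLift (q : M × V × V) : verticalProj (verticalLift q) = q := rfl

theorem hasDerivAt_along_fibre {Z : M × V → M × V} {x : M} {v : V}
    (hZ : DifferentiableAt ℝ Z (x, v)) (w : V) :
    HasDerivAt (fun s : ℝ => Z (x, v + s • w)) (fderiv ℝ Z (x, v) ((0 : M), w)) 0 := by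
  have hline : HasDerivAt (fun s : ℝ => (x, v + s • w)) ((0 : M), w) 0 :=
    (hasDerivAt_const 0 x).prodMk
      (by simpa using ((hasDerivAt_id (0 : ℝ)).smul_const w).const_add v)
  exact hZ.hasFDerivAt.comp_hasDerivAt_of_eq 0 hline (by simp)

theorem fibreDerivVF_apply {Z : M × V → M × V} (hZ : Differentiable ℝ Z) (q : M × V × V) :
    fibreDerivVF Z q = verticalProj (completeLift Z (verticalLift q)) := by
  have h := (ContinuousLinearMap.snd ℝ M V).hasFDerivAt.comp_hasDerivAt 0
    (hasDerivAt_along_fibre (hZ (q.1, q.2.1)) q.2.2)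
  exact congrArg _ (congrArg _ h.deriv)

theorem differentiable_fibreDerivVF {Z : M × V → M × V} (hZ : ContDiff ℝ 2 Z) :
    Differentiable ℝ (fibreDerivVF Z) := by
  rw [funext (fibreDerivVF_apply (hZ.differentiable two_ne_zero))]
  exact verticalProj.differentiable.comp
    ((differentiable_completeLift hZ).comp verticalLift.differentiable)

theorem fst_fderiv_apply_vertical_eq_zero {Z : M × V → M × V} {X : M → M}
    (hproj : ∀ p : M × V, (Z p).1 = X p.1) {x : M} {v : V} (hZ : DifferentiableAt ℝ Z (x, v))
    (w : V) : (fderiv ℝ Z (x, v) ((0 : M), w)).1 = 0 := by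
  have h := (ContinuousLinearMap.fst ℝ M V).hasFDerivAt.comp_hasDerivAt 0
    (hasDerivAt_along_fibre hZ w)
  simp only [Function.comp_def, ContinuousLinearMap.coe_fst', hproj] at h
  exact h.unique (hasDerivAt_const 0 (X x))

theorem verticalLift_fibreDerivVF {Z : M × V → M × V} {X : M → M} (hZ : Differentiable ℝ Z)
    (hproj : ∀ p : M × V, (Z p).1 = X p.1) (q : M × V × V) :
    verticalLift (fibreDerivVF Z q) = completeLift Z (verticalLift q) := by
  rw [fibreDerivVF_apply hZ]
  exact Prod.ext rfl (Prod.ext (fst_fderiv_apply_vertical_eq_zero hproj (hZ _) q.2.2).symm rfl)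

/-- `[FY, FY'] = F[Y, Y']` for smooth projectable vector fields. -/
theorem fibreDeriv_commutes_with_bracket
    (Y Y' : M × V → M × V)
    (hY : ContDiff ℝ (⊤ : ℕ∞) Y) (hY' : ContDiff ℝ (⊤ : ℕ∞) Y')
    (X X' : M → M)
    (hproj : ∀ p : M × V, (Y p).1 = X p.1)
    (hproj' : ∀ p : M × V, (Y' p).1 = X' p.1) :
    lieBkt (fibreDerivVF Y) (fibreDerivVF Y') = fibreDerivVF (lieBkt Y Y') := by
  have hY2 : ContDiff ℝ 2 Y := hY.of_le (WithTop.coe_le_coe.mpr le_top)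
  have hY2' : ContDiff ℝ 2 Y' := hY'.of_le (WithTop.coe_le_coe.mpr le_top)
  have hbracket : Differentiable ℝ (lieBracket ℝ Y Y') :=
    (hY2.lieBracket_vectorField hY2' (by norm_num)).differentiable one_ne_zero
  simp only [lieBkt_eq_lieBracket]
  funext q
  calc lieBracket ℝ (fibreDerivVF Y) (fibreDerivVF Y') q
      = verticalProj (verticalLift (lieBracket ℝ (fibreDerivVF Y) (fibreDerivVF Y') q)) :=
        (verticalProj_verticalLift _).symm
    _ = verticalProj (lieBracket ℝ (completeLift Y) (completeLift Y') (verticalLift q)) := by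
        rw [map_lieBracket_of_related verticalLift (differentiable_fibreDerivVF hY2 q)
          (differentiable_fibreDerivVF hY2' q) (differentiable_completeLift hY2 _)
          (differentiable_completeLift hY2' _)
          (verticalLift_fibreDerivVF (hY2.differentiable two_ne_zero) hproj)
          (verticalLift_fibreDerivVF (hY2'.differentiable two_ne_zero) hproj')]
    _ = fibreDerivVF (lieBracket ℝ Y Y') q := by
        rw [lieBracket_completeLift hY2 hY2', fibreDerivVF_apply hbracket]

end FD
end
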